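/- Let σ be a C^{1,1} hypersurface measure on ℝ³. Then there exists a constant C such that for every λ ∈ ℂ with Im λ > 0 and all f, g ∈ L²(σ), the double integral ∬ (4π|x−y|)^{−1} e^{iλ|x−y|} f(y) \overline{g(x)} dσ(y) dσ(x) converges absolutely and satisfies |∬ (4π|x−y|)^{−1} e^{iλ|x−y|} f(y) \overline{g(x)} dσ(y) dσ(x)| ≤ C (2+(Im λ)²)^{−1/2} ‖f‖_{L²(σ)} ‖g‖_{L²(σ)}. (This is Theorem 1.3 of the paper in dimension 3, where the free Green's kernel for Im λ > 0 is explicitly e^{iλ|x−y|}/(4π|x−y|).) -/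

import Mathlib

open MeasureTheory Metric

noncomputable section

/-- Embed `(x', s) ∈ ℝ^{n} × ℝ` as a point of `ℝ^{n+1}`. -/
def snocE {n : ℕ} (x : EuclideanSpace ℝ (Fin n)) (s : ℝ) : EuclideanSpace ℝ (Fin (n + 1)) :=
  (EuclideanSpace.equiv (Fin (n + 1)) ℝ).symm
    (Fin.snoc (EuclideanSpace.equiv (Fin n) ℝ x) s)

/-- A `C^{1,1}` graph measure on `ℝ^{n+1}`: the pushforward under `x' ↦ (x', F x')` of
`√(1+|∇F|²) dx'` restricted to a compact set `K`, where `∇F` is Lipschitz. -/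
def IsC11GraphMeasure {n : ℕ} (σ : Measure (EuclideanSpace ℝ (Fin (n + 1)))) : Prop :=
  ∃ (F : EuclideanSpace ℝ (Fin n) → ℝ)
    (F' : EuclideanSpace ℝ (Fin n) → (EuclideanSpace ℝ (Fin n) →L[ℝ] ℝ))
    (K : Set (EuclideanSpace ℝ (Fin n))) (L : NNReal),
    IsCompact K ∧ (∀ x, HasFDerivAt F (F' x) x) ∧ LipschitzWith L F' ∧
    σ = Measure.map (fun x => snocE x (F x))
      ((volume.restrict K).withDensity
        (fun x => ENNReal.ofReal (Real.sqrt (1 + ‖F' x‖ ^ 2))))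

/-- A `C^{1,1}` hypersurface measure: a finite sum of images of `C^{1,1}` graph measures
under affine isometries of `ℝ^{n+1}`. -/
def IsC11HypersurfaceMeasure {n : ℕ} (σ : Measure (EuclideanSpace ℝ (Fin (n + 1)))) : Prop :=
  ∃ (m : ℕ)
    (A : Fin m → (EuclideanSpace ℝ (Fin (n + 1)) →ᵃⁱ[ℝ] EuclideanSpace ℝ (Fin (n + 1))))
    (σs : Fin m → Measure (EuclideanSpace ℝ (Fin (n + 1)))),
    (∀ i, IsC11GraphMeasure (σs i)) ∧ σ = ∑ i, Measure.map (A i) (σs i)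

/-- The (closed) support of a measure on a metric space. -/
def measSupport {E : Type*} [MeasurableSpace E] [PseudoMetricSpace E] (σ : Measure E) :
    Set E :=
  {x | ∀ r > 0, σ (Metric.ball x r) ≠ 0}

/-- The `L²(σ)` norm of a function. -/
def L2norm {E : Type*} [MeasurableSpace E] (σ : Measure E) (f : E → ℂ) : ℝ :=
  Real.sqrt (∫ x, ‖f x‖ ^ 2 ∂σ)

/-- Japanese bracket `⟨λ⟩ = (2 + |λ|²)^{1/2}` of a complex number. -/
def jbC (z : ℂ) : ℝ := Real.sqrt (2 + ‖z‖ ^ 2)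

/-- The analytically continued free Green's kernel in dimension 3,
`G₀(λ,x,y) = e^{iλ|x−y|}/(4π|x−y|)`, multiplied by `f(y) conj (g(x))`. -/
def greenIntegrand3 (lam : ℂ) (f g : EuclideanSpace ℝ (Fin 3) → ℂ)
    (p : EuclideanSpace ℝ (Fin 3) × EuclideanSpace ℝ (Fin 3)) : ℂ :=
  ((4 * Real.pi * ‖p.1 - p.2‖ : ℝ) : ℂ)⁻¹ *
    Complex.exp (Complex.I * lam * (‖p.1 - p.2‖ : ℝ)) * f p.2 * (starRingEnd ℂ) (g p.1)

/-!
Each graph piece of `σ` is the image, under `x' ↦ (x', F x')`, of a measure with bounded density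
on a compact set; since this map does not decrease distances, `σ` is finite and
`σ (ball x r) ≤ C r²`. The Green kernel is dominated by the Yukawa potential
`e^{-t|x-y|}/|x-y|`, `t = Im λ`, whose integral against `σ` is, by the layer-cake formula,
`∫_0^∞ (tu+1) e^{-tu} u^{-2} σ(B(x,u)) du`. The quadratic growth bounds this by `2C/t`, and
on `u > 1` finiteness of `σ` bounds it by `C + σ(ℝ³)`; together they give `O((2+t²)^{-1/2})`.
The Schur test turns this uniform bound on the row integrals of the symmetric kernel into the
`L²` bound.
-/

open Filter Real Set
open scoped ENNReal NNReal Topology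

def IsUpperRegular {X : Type*} [PseudoMetricSpace X] [MeasurableSpace X] (μ : Measure X)
    (d : ℕ) (C : ℝ≥0) : Prop :=
  ∀ x r, μ (ball x r) ≤ C * ENNReal.ofReal r ^ d

namespace IsUpperRegular

variable {X : Type*} [PseudoMetricSpace X] [MeasurableSpace X] {d : ℕ}

theorem map_of_isometry {Y : Type*} [PseudoMetricSpace Y] [MeasurableSpace Y] [BorelSpace X]
    [BorelSpace Y] {μ : Measure X} {C : ℝ≥0} (h : IsUpperRegular μ d C) {A : X → Y}
    (hA : Isometry A) : IsUpperRegular (μ.map A) d (2 ^ d * C) := by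
  intro y r
  rw [Measure.map_apply hA.continuous.measurable measurableSet_ball]
  obtain hempty | ⟨z, hz⟩ := (A ⁻¹' ball y r).eq_empty_or_nonempty
  · simp [hempty]
  have hsub : A ⁻¹' ball y r ⊆ ball z (2 * r) := fun w hw => by
    rw [mem_ball, ← hA.dist_eq]
    linarith [dist_triangle_right (A w) (A z) y, mem_ball.1 hw, mem_ball.1 hz]
  calc μ (A ⁻¹' ball y r) ≤ C * ENNReal.ofReal (2 * r) ^ d := (measure_mono hsub).trans (h z _)
    _ = (2 ^ d * C : ℝ≥0) * ENNReal.ofReal r ^ d := by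
      rw [ENNReal.ofReal_mul zero_le_two, mul_pow, ENNReal.ofReal_ofNat]
      push_cast
      ring

theorem finsetSum {ι : Type*} (s : Finset ι) {μ : ι → Measure X} {C : ι → ℝ≥0}
    (h : ∀ i ∈ s, IsUpperRegular (μ i) d (C i)) :
    IsUpperRegular (∑ i ∈ s, μ i) d (∑ i ∈ s, C i) := by
  intro x r
  rw [Measure.finsetSum_apply, ENNReal.ofNNReal_finsetSum, Finset.sum_mul]
  exact Finset.sum_le_sum fun i hi => h i hi x r

end IsUpperRegular

def projE {n : ℕ} (u : EuclideanSpace ℝ (Fin (n + 1))) : EuclideanSpace ℝ (Fin n) :=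
  (EuclideanSpace.equiv (Fin n) ℝ).symm (fun i => u i.castSucc)

theorem projE_snocE {n : ℕ} (x : EuclideanSpace ℝ (Fin n)) (s : ℝ) : projE (snocE x s) = x := by
  ext i
  simp [projE, snocE]

theorem dist_projE_le {n : ℕ} (u v : EuclideanSpace ℝ (Fin (n + 1))) :
    dist (projE u) (projE v) ≤ dist u v := by
  rw [EuclideanSpace.dist_eq, EuclideanSpace.dist_eq, Fin.sum_univ_castSucc]
  exact Real.sqrt_le_sqrt (le_add_of_nonneg_right (sq_nonneg _))

theorem continuous_snocE {n : ℕ} {X : Type*} [TopologicalSpace X]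
    {f : X → EuclideanSpace ℝ (Fin n)} {g : X → ℝ} (hf : Continuous f) (hg : Continuous g) :
    Continuous fun a => snocE (f a) (g a) :=
  (EuclideanSpace.equiv (Fin (n + 1)) ℝ).symm.continuous.comp
    (((EuclideanSpace.equiv (Fin n) ℝ).continuous.comp hf).finSnoc hg)

theorem volume_ball_le {n : ℕ} (p : EuclideanSpace ℝ (Fin n)) (r : ℝ) :
    volume (ball p r) ≤ volume (ball (0 : EuclideanSpace ℝ (Fin n)) 1) * ENNReal.ofReal r ^ n := by
  obtain hr | hr := le_or_gt r 0
  · simp [ball_eq_empty.2 hr]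
  rw [Measure.addHaar_ball_of_pos _ _ hr, finrank_euclideanSpace_fin, ENNReal.ofReal_pow hr.le,
    mul_comm]

namespace IsC11GraphMeasure

variable {n : ℕ} {σ : Measure (EuclideanSpace ℝ (Fin (n + 1)))}

theorem exists_le_smul_map (h : IsC11GraphMeasure σ) :
    ∃ (F : EuclideanSpace ℝ (Fin n) → ℝ) (K : Set (EuclideanSpace ℝ (Fin n))) (M : ℝ≥0),
      Continuous F ∧ IsCompact K ∧
        σ ≤ (M : ℝ≥0∞) • (volume.restrict K).map (fun x => snocE x (F x)) := by
  obtain ⟨F, F', K, L, hK, hF, hF', rfl⟩ := h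
  obtain ⟨B, hB⟩ := hK.exists_bound_of_continuousOn hF'.continuous.continuousOn
  have hFc : Continuous F := continuous_iff_continuousAt.2 fun x => (hF x).continuousAt
  refine ⟨F, K, (√(1 + B ^ 2)).toNNReal, hFc, hK, ?_⟩
  have hdensity : ∀ᵐ x ∂volume.restrict K,
      ENNReal.ofReal √(1 + ‖F' x‖ ^ 2) ≤ ((√(1 + B ^ 2)).toNNReal : ℝ≥0∞) :=
    ae_restrict_of_forall_mem hK.measurableSet fun x hx => by
      rw [ENNReal.ofNNReal_toNNReal]
      gcongr
      exact hB x hx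
  rw [← Measure.map_smul, ← withDensity_const]
  exact Measure.map_mono (withDensity_mono hdensity) (continuous_snocE continuous_id hFc).measurable

theorem isFiniteMeasure (h : IsC11GraphMeasure σ) : IsFiniteMeasure σ := by
  obtain ⟨F, K, M, hF, hK, hσ⟩ := h.exists_le_smul_map
  have hΦ : Measurable fun a => snocE a (F a) := (continuous_snocE continuous_id hF).measurable
  refine ⟨(hσ univ).trans_lt ?_⟩
  rw [Measure.smul_apply, Measure.map_apply hΦ MeasurableSet.univ, preimage_univ,
    Measure.restrict_apply_univ, smul_eq_mul]
  exact ENNReal.mul_lt_top ENNReal.coe_lt_top hK.measure_lt_top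

theorem exists_isUpperRegular (h : IsC11GraphMeasure σ) : ∃ C, IsUpperRegular σ n C := by
  obtain ⟨F, K, M, hF, -, hσ⟩ := h.exists_le_smul_map
  have hΦ : Measurable fun a => snocE a (F a) := (continuous_snocE continuous_id hF).measurable
  set V := volume (ball (0 : EuclideanSpace ℝ (Fin n)) 1)
  refine ⟨M * V.toNNReal, fun x r => ?_⟩
  have hgraph : (fun a => snocE a (F a)) ⁻¹' ball x r ⊆ ball (projE x) r := fun a ha => by
    rw [mem_ball, ← projE_snocE a (F a)]
    exact (dist_projE_le _ _).trans_lt ha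
  calc σ (ball x r)
      ≤ M * volume.restrict K ((fun a => snocE a (F a)) ⁻¹' ball x r) :=
        (hσ _).trans_eq (by rw [Measure.smul_apply, Measure.map_apply hΦ measurableSet_ball,
          smul_eq_mul])
    _ ≤ M * (V * ENNReal.ofReal r ^ n) := by
        gcongr
        exact (Measure.restrict_apply_le _ _).trans
          ((measure_mono hgraph).trans (volume_ball_le _ _))
    _ = (M * V.toNNReal : ℝ≥0) * ENNReal.ofReal r ^ n := by
        rw [ENNReal.coe_mul, ENNReal.coe_toNNReal measure_ball_lt_top.ne, mul_assoc]

end IsC11GraphMeasure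

namespace IsC11HypersurfaceMeasure

variable {n : ℕ} {σ : Measure (EuclideanSpace ℝ (Fin (n + 1)))}

theorem isFiniteMeasure (h : IsC11HypersurfaceMeasure σ) : IsFiniteMeasure σ := by
  obtain ⟨m, A, σs, hσs, rfl⟩ := h
  have := fun i => (hσs i).isFiniteMeasure
  refine ⟨?_⟩
  rw [Measure.finsetSum_apply]
  exact ENNReal.sum_lt_top.2 fun i _ => measure_lt_top _ _

theorem exists_isUpperRegular (h : IsC11HypersurfaceMeasure σ) : ∃ C, IsUpperRegular σ n C := by
  obtain ⟨m, A, σs, hσs, rfl⟩ := h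
  choose C hC using fun i => (hσs i).exists_isUpperRegular
  exact ⟨_, IsUpperRegular.finsetSum _ fun i _ => (hC i).map_of_isometry (A i).isometry⟩

end IsC11HypersurfaceMeasure

section Schur

variable {X Y : Type*} [MeasurableSpace X] [MeasurableSpace Y] {μ : Measure X} {ν : Measure Y}
  [SFinite μ] [SFinite ν]

theorem lintegral_prod_mul_le_of_lintegral_le {k : X × Y → ℝ≥0∞} (hk : Measurable k)
    {M : ℝ≥0∞} (hcol : ∀ y, ∫⁻ x, k (x, y) ∂μ ≤ M) {f : Y → ℝ≥0∞} (hf : AEMeasurable f ν) :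
    ∫⁻ p, k p * f p.2 ∂(μ.prod ν) ≤ M * ∫⁻ y, f y ∂ν := by
  rw [lintegral_prod_symm (fun p => k p * f p.2) (hk.aemeasurable.mul hf.comp_snd),
    ← lintegral_const_mul'' _ hf]
  refine lintegral_mono fun y => ?_
  exact (lintegral_mul_const'' (f y) (hk.comp measurable_prodMk_right).aemeasurable).trans_le
    (mul_le_mul_left (hcol y) _)

theorem lintegral_mul_enorm_le_schur {E F : Type*} [NormedAddCommGroup E] [NormedAddCommGroup F]
    {k : X × Y → ℝ≥0∞} (hk : Measurable k) {M : ℝ≥0∞}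
    (hrow : ∀ x, ∫⁻ y, k (x, y) ∂ν ≤ M) (hcol : ∀ y, ∫⁻ x, k (x, y) ∂μ ≤ M)
    {f : Y → E} {g : X → F} (hf : AEStronglyMeasurable f ν) (hg : AEStronglyMeasurable g μ) :
    ∫⁻ p, k p * (‖f p.2‖ₑ * ‖g p.1‖ₑ) ∂(μ.prod ν) ≤ M * eLpNorm f 2 ν * eLpNorm g 2 μ := by
  have hsqrt : ∀ (a b : ℝ≥0∞), (a ^ (1 / 2 : ℝ) * b) ^ (2 : ℝ) = a * b ^ (2 : ℝ) := fun a b => by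
    rw [ENNReal.mul_rpow_of_nonneg _ _ zero_le_two, ← ENNReal.rpow_mul]
    norm_num
  have hsplit : ∀ p : X × Y, k p * (‖f p.2‖ₑ * ‖g p.1‖ₑ) =
      (k p ^ (1 / 2 : ℝ) * ‖f p.2‖ₑ) * (k p ^ (1 / 2 : ℝ) * ‖g p.1‖ₑ) := fun p => by
    rw [mul_mul_mul_comm, ← ENNReal.rpow_add_of_nonneg _ _ (by norm_num) (by norm_num)]
    norm_num
  have hf2 : ∫⁻ p, k p * ‖f p.2‖ₑ ^ (2 : ℝ) ∂(μ.prod ν) ≤ M * ∫⁻ y, ‖f y‖ₑ ^ (2 : ℝ) ∂ν :=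
    lintegral_prod_mul_le_of_lintegral_le hk hcol (hf.enorm.pow_const _)
  have hg2 : ∫⁻ p, k p * ‖g p.1‖ₑ ^ (2 : ℝ) ∂(μ.prod ν) ≤ M * ∫⁻ x, ‖g x‖ₑ ^ (2 : ℝ) ∂μ := by
    rw [← lintegral_prod_swap]
    exact lintegral_prod_mul_le_of_lintegral_le (hk.comp measurable_swap) hrow
      (hg.enorm.pow_const _)
  calc ∫⁻ p, k p * (‖f p.2‖ₑ * ‖g p.1‖ₑ) ∂(μ.prod ν)
      ≤ (∫⁻ p, k p * ‖f p.2‖ₑ ^ (2 : ℝ) ∂(μ.prod ν)) ^ (1 / 2 : ℝ) *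
          (∫⁻ p, k p * ‖g p.1‖ₑ ^ (2 : ℝ) ∂(μ.prod ν)) ^ (1 / 2 : ℝ) := by
        simp_rw [hsplit, ← hsqrt]
        exact ENNReal.lintegral_mul_le_Lp_mul_Lq _ Real.HolderConjugate.two_two
          ((hk.pow_const _).aemeasurable.mul hf.enorm.comp_snd)
          ((hk.pow_const _).aemeasurable.mul hg.enorm.comp_fst)
    _ ≤ (M * ∫⁻ y, ‖f y‖ₑ ^ (2 : ℝ) ∂ν) ^ (1 / 2 : ℝ) *
          (M * ∫⁻ x, ‖g x‖ₑ ^ (2 : ℝ) ∂μ) ^ (1 / 2 : ℝ) := by gcongr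
    _ = M * eLpNorm f 2 ν * eLpNorm g 2 μ := by
        rw [eLpNorm_eq_lintegral_rpow_enorm_toReal two_ne_zero ENNReal.ofNat_ne_top,
          eLpNorm_eq_lintegral_rpow_enorm_toReal two_ne_zero ENNReal.ofNat_ne_top,
          ENNReal.toReal_ofNat, ENNReal.mul_rpow_of_nonneg _ _ (by norm_num),
          ENNReal.mul_rpow_of_nonneg _ _ (by norm_num), mul_mul_mul_comm,
          ← ENNReal.rpow_add_of_nonneg _ _ (by norm_num) (by norm_num)]
        norm_num
        ring

end Schur

theorem lintegral_Ioi_ofReal_of_hasDerivAt {g g' : ℝ → ℝ} {a l : ℝ}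
    (hderiv : ∀ x ∈ Ici a, HasDerivAt g (g' x) x) (hpos : ∀ x ∈ Ioi a, 0 ≤ g' x)
    (hlim : Tendsto g atTop (𝓝 l)) :
    ∫⁻ x in Ioi a, ENNReal.ofReal (g' x) = ENNReal.ofReal (l - g a) := by
  have hint := integrableOn_Ioi_deriv_of_nonneg' hderiv hpos hlim
  rw [← ofReal_integral_eq_lintegral_ofReal hint (ae_restrict_of_forall_mem measurableSet_Ioi hpos),
    integral_Ioi_of_hasDerivAt_of_tendsto' hderiv hint hlim]

def yukawa (t r : ℝ) : ℝ := r⁻¹ * exp (-(t * r))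

def yukawaDensity (t u : ℝ) : ℝ := (t * u + 1) * exp (-(t * u)) / u ^ 2

theorem hasDerivAt_yukawa (t : ℝ) {u : ℝ} (hu : u ≠ 0) :
    HasDerivAt (yukawa t) (-yukawaDensity t u) u := by
  have hexp : HasDerivAt (fun r => exp (-(t * r))) (exp (-(t * u)) * -t) u := by
    simpa using ((hasDerivAt_id u).const_mul t).neg.exp
  refine ((hasDerivAt_inv hu).fun_mul hexp).congr_deriv ?_
  unfold yukawaDensity
  field_simp
  ring

theorem measurable_yukawa (t : ℝ) : Measurable (yukawa t) := by
  unfold yukawa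
  fun_prop

theorem measurable_yukawaDensity (t : ℝ) : Measurable (yukawaDensity t) := by
  unfold yukawaDensity
  fun_prop

theorem yukawaDensity_nonneg {t u : ℝ} (ht : 0 ≤ t) (hu : 0 ≤ u) : 0 ≤ yukawaDensity t u := by
  unfold yukawaDensity
  positivity

theorem tendsto_yukawa_atTop {t : ℝ} (ht : 0 ≤ t) : Tendsto (yukawa t) atTop (𝓝 0) := by
  refine tendsto_of_tendsto_of_tendsto_of_le_of_le' tendsto_const_nhds tendsto_inv_atTop_zero ?_ ?_
  all_goals filter_upwards [eventually_gt_atTop 0] with u hu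
  · unfold yukawa
    positivity
  · exact mul_le_of_le_one_right (inv_nonneg.2 hu.le) (exp_le_one_iff.2 (by nlinarith))

theorem lintegral_Ioi_yukawaDensity {t s : ℝ} (ht : 0 ≤ t) (hs : 0 < s) :
    ∫⁻ u in Ioi s, ENNReal.ofReal (yukawaDensity t u) = ENNReal.ofReal (yukawa t s) := by
  have h := lintegral_Ioi_ofReal_of_hasDerivAt (g := fun u => -yukawa t u) (l := 0)
    (fun u hu => by simpa using (hasDerivAt_yukawa t (hs.trans_le hu).ne').fun_neg)
    (fun u hu => yukawaDensity_nonneg ht (hs.trans hu).le)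
    (by simpa using (tendsto_yukawa_atTop ht).neg)
  rwa [zero_sub, neg_neg] at h

theorem lintegral_Ioi_zero_mul_exp_neg {t : ℝ} (ht : 0 < t) :
    ∫⁻ u in Ioi 0, ENNReal.ofReal ((t * u + 1) * exp (-(t * u))) = ENNReal.ofReal (2 / t) := by
  have hlim : Tendsto (fun u => -((u + 2 / t) * exp (-(t * u)))) atTop (𝓝 0) := by
    have h1 := tendsto_rpow_mul_exp_neg_mul_atTop_nhds_zero 1 t ht
    have h0 := (tendsto_rpow_mul_exp_neg_mul_atTop_nhds_zero 0 t ht).const_mul (2 / t)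
    simpa [add_mul, mul_comm] using (h1.add h0).neg
  simpa using lintegral_Ioi_ofReal_of_hasDerivAt (a := 0)
    (g' := fun u => (t * u + 1) * exp (-(t * u)))
    (fun u _ => by
      have hexp : HasDerivAt (fun r => exp (-(t * r))) (exp (-(t * u)) * -t) u := by
        simpa using ((hasDerivAt_id u).const_mul t).neg.exp
      refine (((hasDerivAt_id u).add_const (2 / t)).fun_mul hexp).neg.congr_deriv ?_
      simp only [id]
      field_simp
      ring)
    (fun u hu => by have : (0 : ℝ) < u := hu; positivity) hlim

/-- Layer cake: `yukawa t s = ∫_{u > s} yukawaDensity t u`, and the integrals over `y` and `u`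
are swapped. -/
theorem lintegral_yukawa_dist_le {X : Type*} [PseudoMetricSpace X] [MeasurableSpace X]
    [OpensMeasurableSpace X] (μ : Measure X) [SFinite μ] {t : ℝ} (ht : 0 ≤ t) (x : X) :
    ∫⁻ y, ENNReal.ofReal (yukawa t (dist x y)) ∂μ ≤
      ∫⁻ u in Ioi 0, ENNReal.ofReal (yukawaDensity t u) * μ (ball x u) := by
  set A : Set (X × ℝ) := {p | dist p.1 x < p.2}
  set k : X → ℝ → ℝ≥0∞ := fun y u =>
    A.indicator (fun p => ENNReal.ofReal (yukawaDensity t p.2)) (y, u)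
  have hk : Measurable (Function.uncurry k) := by
    refine Measurable.indicator ?_ (measurableSet_lt ?_ measurable_snd)
    · exact (measurable_yukawaDensity t).ennreal_ofReal.comp measurable_snd
    · exact (continuous_id.dist continuous_const).measurable.comp measurable_fst
  have hk_ball : ∀ u, ∫⁻ y, k y u ∂μ = ENNReal.ofReal (yukawaDensity t u) * μ (ball x u) :=
    fun u => by
      rw [← lintegral_indicator_const measurableSet_ball]
      rfl
  have hk_layer : ∀ y, ENNReal.ofReal (yukawa t (dist x y)) ≤ ∫⁻ u in Ioi 0, k y u := fun y => by
    rw [dist_comm]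
    obtain hxy | hxy := (dist_nonneg (x := y) (y := x)).eq_or_lt
    · simp [← hxy, yukawa]
    have hk_Ioi : ∀ u,
        k y u = (Ioi (dist y x)).indicator (fun u => ENNReal.ofReal (yukawaDensity t u)) u :=
      fun u => by simp [k, A, indicator]
    simp_rw [hk_Ioi]
    rw [lintegral_indicator measurableSet_Ioi, Measure.restrict_restrict measurableSet_Ioi,
      Ioi_inter_Ioi, max_eq_left dist_nonneg, lintegral_Ioi_yukawaDensity ht hxy]
  calc ∫⁻ y, ENNReal.ofReal (yukawa t (dist x y)) ∂μ
      ≤ ∫⁻ y, (∫⁻ u in Ioi 0, k y u) ∂μ := lintegral_mono hk_layer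
    _ = ∫⁻ u in Ioi 0, ∫⁻ y, k y u ∂μ := lintegral_lintegral_swap hk.aemeasurable
    _ = ∫⁻ u in Ioi 0, ENNReal.ofReal (yukawaDensity t u) * μ (ball x u) := by simp_rw [hk_ball]

theorem add_one_mul_exp_neg_le_one (x : ℝ) : (x + 1) * exp (-x) ≤ 1 :=
  calc (x + 1) * exp (-x) ≤ exp x * exp (-x) := by gcongr; exact add_one_le_exp x
    _ = 1 := by rw [← exp_add, add_neg_cancel, exp_zero]

theorem min_div_le_mul_rpow_neg_half {a b t : ℝ} (ha : 0 ≤ a) (hb : 0 ≤ b) (ht : 0 < t) :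
    min (a / t) b ≤ √3 * (a + b) * (2 + t ^ 2) ^ (-(1 / 2 : ℝ)) := by
  have hpos : 0 < √(2 + t ^ 2) := sqrt_pos.2 (by positivity)
  rw [rpow_neg (by positivity), ← sqrt_eq_rpow, ← div_eq_mul_inv]
  obtain ht1 | ht1 := le_total t 1
  · refine (min_le_right _ _).trans ((le_div_iff₀ hpos).2 ?_)
    have hsqrt : √(2 + t ^ 2) ≤ √3 := sqrt_le_sqrt (by nlinarith)
    nlinarith [sqrt_nonneg 3]
  · refine (min_le_left _ _).trans ((div_le_div_iff₀ ht hpos).2 ?_)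
    have hsqrt : √(2 + t ^ 2) ≤ √3 * t := by
      have h3 : √(2 + t ^ 2) ≤ √(3 * t ^ 2) := sqrt_le_sqrt (by nlinarith)
      rwa [sqrt_mul (by norm_num), sqrt_sq ht.le] at h3
    nlinarith [sqrt_nonneg 3]

namespace IsUpperRegular

variable {X : Type*} [PseudoMetricSpace X] [MeasurableSpace X] {μ : Measure X} {C : ℝ≥0}

theorem ofReal_yukawaDensity_mul_le (h : IsUpperRegular μ 2 C) (x : X) {t u : ℝ} (hu : 0 < u) :
    ENNReal.ofReal (yukawaDensity t u) * μ (ball x u) ≤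
      C * ENNReal.ofReal ((t * u + 1) * exp (-(t * u))) := by
  have hmul : yukawaDensity t u * u ^ 2 = (t * u + 1) * exp (-(t * u)) := by
    unfold yukawaDensity
    field_simp
  calc ENNReal.ofReal (yukawaDensity t u) * μ (ball x u)
      ≤ ENNReal.ofReal (yukawaDensity t u) * (C * ENNReal.ofReal u ^ 2) := by gcongr; exact h x u
    _ = C * ENNReal.ofReal ((t * u + 1) * exp (-(t * u))) := by
      rw [← hmul, ENNReal.ofReal_mul' (sq_nonneg u), ENNReal.ofReal_pow hu.le]
      ring

theorem lintegral_yukawaDensity_mul_le_div (h : IsUpperRegular μ 2 C) (x : X) {t : ℝ}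
    (ht : 0 < t) :
    ∫⁻ u in Ioi 0, ENNReal.ofReal (yukawaDensity t u) * μ (ball x u) ≤ C * ENNReal.ofReal (2 / t) :=
  calc ∫⁻ u in Ioi 0, ENNReal.ofReal (yukawaDensity t u) * μ (ball x u)
      ≤ ∫⁻ u in Ioi 0, C * ENNReal.ofReal ((t * u + 1) * exp (-(t * u))) :=
        setLIntegral_mono' measurableSet_Ioi fun u hu => h.ofReal_yukawaDensity_mul_le x hu
    _ = C * ENNReal.ofReal (2 / t) := by
        rw [lintegral_const_mul' _ _ ENNReal.coe_ne_top, lintegral_Ioi_zero_mul_exp_neg ht]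

theorem lintegral_yukawaDensity_mul_le_add (h : IsUpperRegular μ 2 C) (x : X) {t : ℝ}
    (ht : 0 ≤ t) :
    ∫⁻ u in Ioi 0, ENNReal.ofReal (yukawaDensity t u) * μ (ball x u) ≤ C + μ univ := by
  rw [← Ioc_union_Ioi_eq_Ioi zero_le_one,
    lintegral_union measurableSet_Ioi (Ioc_disjoint_Ioi le_rfl)]
  gcongr
  · calc ∫⁻ u in Ioc 0 1, ENNReal.ofReal (yukawaDensity t u) * μ (ball x u)
        ≤ ∫⁻ _ in Ioc 0 1, (C : ℝ≥0∞) := setLIntegral_mono' measurableSet_Ioc fun u hu =>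
          (h.ofReal_yukawaDensity_mul_le x hu.1).trans <| mul_le_of_le_one_right' <|
            ENNReal.ofReal_le_one.2 (add_one_mul_exp_neg_le_one _)
      _ = C := by simp
  · calc ∫⁻ u in Ioi 1, ENNReal.ofReal (yukawaDensity t u) * μ (ball x u)
        ≤ ∫⁻ u in Ioi 1, ENNReal.ofReal (yukawaDensity t u) * μ univ :=
          setLIntegral_mono' measurableSet_Ioi fun u _ => by gcongr; exact subset_univ _
      _ = ENNReal.ofReal (yukawa t 1) * μ univ := by
          rw [lintegral_mul_const _ (measurable_yukawaDensity t).ennreal_ofReal,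
            lintegral_Ioi_yukawaDensity ht one_pos]
      _ ≤ μ univ := by
          refine mul_le_of_le_one_left' (ENNReal.ofReal_le_one.2 ?_)
          simpa [yukawa] using ht

theorem exists_lintegral_yukawa_le [OpensMeasurableSpace X] [IsFiniteMeasure μ]
    (h : IsUpperRegular μ 2 C) :
    ∃ M > 0, ∀ t > 0, ∀ x, ∫⁻ y, ENNReal.ofReal (yukawa t (dist x y)) ∂μ ≤
      ENNReal.ofReal (M * (2 + t ^ 2) ^ (-(1 / 2 : ℝ))) := by
  refine ⟨√3 * (2 * C + (C + (μ univ).toReal + 1)), by positivity, fun t ht x => ?_⟩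
  have hsmall : (C : ℝ≥0∞) + μ univ ≤ ENNReal.ofReal (C + (μ univ).toReal + 1) := by
    rw [ENNReal.ofReal_add (by positivity) zero_le_one,
      ENNReal.ofReal_add C.coe_nonneg ENNReal.toReal_nonneg,
      ENNReal.ofReal_coe_nnreal, ENNReal.ofReal_toReal (measure_ne_top _ _)]
    exact le_self_add
  have hlarge : (C : ℝ≥0∞) * ENNReal.ofReal (2 / t) = ENNReal.ofReal (2 * C / t) := by
    rw [← ENNReal.ofReal_coe_nnreal, ← ENNReal.ofReal_mul C.coe_nonneg]
    ring_nf
  calc ∫⁻ y, ENNReal.ofReal (yukawa t (dist x y)) ∂μ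
      ≤ ∫⁻ u in Ioi 0, ENNReal.ofReal (yukawaDensity t u) * μ (ball x u) :=
        lintegral_yukawa_dist_le μ ht.le x
    _ ≤ ENNReal.ofReal (min (2 * C / t) (C + (μ univ).toReal + 1)) := by
        rw [ENNReal.ofReal_min, ← hlarge]
        exact le_min (h.lintegral_yukawaDensity_mul_le_div x ht)
          ((h.lintegral_yukawaDensity_mul_le_add x ht.le).trans hsmall)
    _ ≤ ENNReal.ofReal (√3 * (2 * C + (C + (μ univ).toReal + 1)) * (2 + t ^ 2) ^ (-(1 / 2 : ℝ))) :=
        ENNReal.ofReal_le_ofReal (min_div_le_mul_rpow_neg_half (by positivity) (by positivity) ht)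

end IsUpperRegular

theorem L2norm_eq_toReal_eLpNorm {E : Type*} [MeasurableSpace E] {σ : Measure E} {f : E → ℂ}
    (hf : MemLp f 2 σ) : L2norm σ f = (eLpNorm f 2 σ).toReal := by
  rw [hf.eLpNorm_eq_integral_rpow_norm two_ne_zero ENNReal.ofNat_ne_top,
    ENNReal.toReal_ofReal (by positivity), L2norm, sqrt_eq_rpow]
  norm_num

theorem norm_greenIntegrand3_le (lam : ℂ) (f g : EuclideanSpace ℝ (Fin 3) → ℂ)
    (p : EuclideanSpace ℝ (Fin 3) × EuclideanSpace ℝ (Fin 3)) :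
    ‖greenIntegrand3 lam f g p‖ ≤ yukawa lam.im (dist p.1 p.2) * (‖f p.2‖ * ‖g p.1‖) := by
  have hinv : ‖((4 * π * ‖p.1 - p.2‖ : ℝ) : ℂ)⁻¹‖ ≤ ‖p.1 - p.2‖⁻¹ := by
    rw [norm_inv, Complex.norm_real, norm_of_nonneg (by positivity), mul_inv]
    exact mul_le_of_le_one_left (by positivity) (inv_le_one_of_one_le₀ (by nlinarith [pi_gt_three]))
  have hexp : ‖Complex.exp (Complex.I * lam * (‖p.1 - p.2‖ : ℝ))‖ =
      exp (-(lam.im * ‖p.1 - p.2‖)) := by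
    rw [Complex.norm_exp]
    simp
  rw [greenIntegrand3, norm_mul, norm_mul, norm_mul, hexp, RCLike.norm_conj, dist_eq_norm, yukawa]
  have hexp_pos := exp_pos (-(lam.im * ‖p.1 - p.2‖))
  calc _ ≤ ‖p.1 - p.2‖⁻¹ * exp (-(lam.im * ‖p.1 - p.2‖)) * ‖f p.2‖ * ‖g p.1‖ := by gcongr
    _ = _ := by ring

theorem integrable_greenIntegrand3_and_norm_integral_le {σ : Measure (EuclideanSpace ℝ (Fin 3))}
    [SFinite σ] {lam : ℂ} {B : ℝ} (hB : 0 ≤ B)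
    (hrow : ∀ x, ∫⁻ y, ENNReal.ofReal (yukawa lam.im (dist x y)) ∂σ ≤ ENNReal.ofReal B)
    {f g : EuclideanSpace ℝ (Fin 3) → ℂ} (hf : MemLp f 2 σ) (hg : MemLp g 2 σ) :
    Integrable (greenIntegrand3 lam f g) (σ.prod σ) ∧
      ‖∫ p, greenIntegrand3 lam f g p ∂(σ.prod σ)‖ ≤ B * L2norm σ f * L2norm σ g := by
  have hk : Measurable fun p : EuclideanSpace ℝ (Fin 3) × EuclideanSpace ℝ (Fin 3) =>
      ENNReal.ofReal (yukawa lam.im (dist p.1 p.2)) :=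
    (measurable_yukawa _).ennreal_ofReal.comp continuous_dist.measurable
  have hcol : ∀ y, ∫⁻ x, ENNReal.ofReal (yukawa lam.im (dist x y)) ∂σ ≤ ENNReal.ofReal B := by
    simpa only [dist_comm] using hrow
  have hbound : ∫⁻ p, ‖greenIntegrand3 lam f g p‖ₑ ∂(σ.prod σ) ≤
      ENNReal.ofReal B * eLpNorm f 2 σ * eLpNorm g 2 σ := by
    refine le_trans (lintegral_mono fun p => ?_)
      (lintegral_mul_enorm_le_schur hk hrow hcol hf.1 hg.1)
    rw [← ofReal_norm, ← ofReal_norm, ← ofReal_norm, ← ENNReal.ofReal_mul (norm_nonneg _),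
      ← ENNReal.ofReal_mul' (by positivity)]
    exact ENNReal.ofReal_le_ofReal (norm_greenIntegrand3_le lam f g p)
  have hfin : ENNReal.ofReal B * eLpNorm f 2 σ * eLpNorm g 2 σ < ⊤ :=
    ENNReal.mul_lt_top (ENNReal.mul_lt_top ENNReal.ofReal_lt_top hf.2) hg.2
  have hmeas : AEStronglyMeasurable (greenIntegrand3 lam f g) (σ.prod σ) := by
    have hkernel : Measurable fun p : EuclideanSpace ℝ (Fin 3) × EuclideanSpace ℝ (Fin 3) =>
        ((4 * π * ‖p.1 - p.2‖ : ℝ) : ℂ)⁻¹ * Complex.exp (Complex.I * lam * (‖p.1 - p.2‖ : ℝ)) := by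
      fun_prop
    exact (hkernel.aestronglyMeasurable.mul hf.1.comp_snd).mul
      (continuous_star.comp_aestronglyMeasurable hg.1.comp_fst)
  refine ⟨⟨hmeas, hbound.trans_lt hfin⟩, ?_⟩
  calc ‖∫ p, greenIntegrand3 lam f g p ∂(σ.prod σ)‖
      ≤ (∫⁻ p, ENNReal.ofReal ‖greenIntegrand3 lam f g p‖ ∂(σ.prod σ)).toReal :=
        norm_integral_le_lintegral_norm _
    _ ≤ (ENNReal.ofReal B * eLpNorm f 2 σ * eLpNorm g 2 σ).toReal := by
        simp_rw [ofReal_norm]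
        exact ENNReal.toReal_mono hfin.ne hbound
    _ = B * L2norm σ f * L2norm σ g := by
        rw [ENNReal.toReal_mul, ENNReal.toReal_mul, ENNReal.toReal_ofReal hB,
          L2norm_eq_toReal_eLpNorm hf, L2norm_eq_toReal_eLpNorm hg]

/-- Theorem 1.3 of the paper in dimension 3. For a `C^{1,1}` hypersurface
measure `σ` on `ℝ³` and `Im λ > 0`, the restricted Green's function pairing satisfies
`|∬ G₀(λ,x,y) f(y) conj(g(x)) dσ dσ| ≤ C (2+(Im λ)²)^{−1/2} ‖f‖ ‖g‖`. -/
theorem greens_function_restriction_bound_large_Im_dim3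
    (σ : Measure (EuclideanSpace ℝ (Fin 3)))
    (hσ : IsC11HypersurfaceMeasure (n := 2) σ) :
    ∃ C > 0, ∀ lam : ℂ, 0 < lam.im →
      ∀ f g : EuclideanSpace ℝ (Fin 3) → ℂ, MemLp f 2 σ → MemLp g 2 σ →
        Integrable (greenIntegrand3 lam f g) (σ.prod σ) ∧
        ‖∫ p, greenIntegrand3 lam f g p ∂(σ.prod σ)‖ ≤
          C * (2 + lam.im ^ 2) ^ (-(1/2 : ℝ)) * L2norm σ f * L2norm σ g := by
  have := hσ.isFiniteMeasure
  obtain ⟨C, hC⟩ := hσ.exists_isUpperRegular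
  obtain ⟨M, hM, hrow⟩ := hC.exists_lintegral_yukawa_le
  exact ⟨M, hM, fun lam hlam f g hf hg =>
    integrable_greenIntegrand3_and_norm_integral_le (by positivity) (hrow lam.im hlam) hf hg⟩

end
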